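/- arXiv:2412.00922 — 2 statements merged into one kernel-verified Lean document; each statement's English description precedes it below -/
import Mathlib

section
/- Let X ⊆ ℝⁿ, S_v ⊆ ℝ^o, f_g : ℝⁿ × ℝ^o → ℝⁿ, h : ℝ^o → ℝⁿ, and suppose there exist c_Φ ≥ 1 and λ ∈ [0,1) with ‖Φ(x,v,t) − h(v)‖ ≤ c_Φ·‖x − h(v)‖·λ^t for all x ∈ X, v ∈ S_v, t ∈ ℕ. Let N ∈ ℕ be such that c_Φ·λ^N < 1, and define V(x,v) := Σ_{i=0}^{N−1} ‖Φ(x,v,i) − h(v)‖. Then for all x ∈ X and v ∈ S_v: (i) ‖x − h(v)‖ ≤ V(x,v) ≤ (c_Φ/(1−λ))·‖x − h(v)‖, and (ii) V(f_g(x,v), v) − V(x,v) ≤ −(1 − c_Φ·λ^N)·‖x − h(v)‖. -/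
open Finset

/-- Iteration of the closed loop `f_g` with frozen reference input `v`:
`Φ(x,v,0) = x`, `Φ(x,v,t+1) = f_g(Φ(x,v,t), v)`. -/
def Phi {n o : ℕ}
    (fg : EuclideanSpace ℝ (Fin n) → EuclideanSpace ℝ (Fin o) → EuclideanSpace ℝ (Fin n))
    (x : EuclideanSpace ℝ (Fin n)) (v : EuclideanSpace ℝ (Fin o)) :
    ℕ → EuclideanSpace ℝ (Fin n)
  | 0 => x
  | t + 1 => fg (Phi fg x v t) v

lemma Phi_shift {n o : ℕ}
    (fg : EuclideanSpace ℝ (Fin n) → EuclideanSpace ℝ (Fin o) → EuclideanSpace ℝ (Fin n))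
    (x : EuclideanSpace ℝ (Fin n)) (v : EuclideanSpace ℝ (Fin o)) (i : ℕ) :
    Phi fg (fg x v) v i = Phi fg x v (i + 1) := by
  induction i with
  | zero => rfl
  | succ k ih => simp [Phi, ih]

/-- The explicit bound and decrease properties of the Lyapunov function
`V(x,v) = Σ_{i=0}^{N-1} ‖Φ(x,v,i) − h(v)‖` constructed in the proof of Lemma 1 of the paper. -/
theorem stmt5 {n o : ℕ} (X : Set (EuclideanSpace ℝ (Fin n)))
    (Sv : Set (EuclideanSpace ℝ (Fin o)))
    (fg : EuclideanSpace ℝ (Fin n) → EuclideanSpace ℝ (Fin o) → EuclideanSpace ℝ (Fin n))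
    (h : EuclideanSpace ℝ (Fin o) → EuclideanSpace ℝ (Fin n))
    (cΦ lam : ℝ) (hcΦ : 1 ≤ cΦ) (hlam0 : 0 ≤ lam) (hlam1 : lam < 1)
    (hstab : ∀ x ∈ X, ∀ v ∈ Sv, ∀ t : ℕ, ‖Phi fg x v t - h v‖ ≤ cΦ * ‖x - h v‖ * lam ^ t)
    (N : ℕ) (hN : cΦ * lam ^ N < 1) :
    ∀ x ∈ X, ∀ v ∈ Sv,
      (‖x - h v‖ ≤ ∑ i ∈ Finset.range N, ‖Phi fg x v i - h v‖ ∧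
        ∑ i ∈ Finset.range N, ‖Phi fg x v i - h v‖ ≤ cΦ / (1 - lam) * ‖x - h v‖) ∧
      (∑ i ∈ Finset.range N, ‖Phi fg (fg x v) v i - h v‖) -
          (∑ i ∈ Finset.range N, ‖Phi fg x v i - h v‖) ≤
        -((1 - cΦ * lam ^ N) * ‖x - h v‖) := by
  intro x hx v hv
  have hNpos : 0 < N := by
    by_contra hN0
    simp [Nat.eq_zero_of_not_pos hN0] at hN
    linarith
  have hxn : (0:ℝ) ≤ ‖x - h v‖ := norm_nonneg _
  constructor
  · constructor
    · calc ‖x - h v‖ = ‖Phi fg x v 0 - h v‖ := rfl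
        _ ≤ ∑ i ∈ Finset.range N, ‖Phi fg x v i - h v‖ :=
          Finset.single_le_sum (f := fun i => ‖Phi fg x v i - h v‖)
            (fun i _ => norm_nonneg _) (Finset.mem_range.mpr hNpos)
    · calc ∑ i ∈ Finset.range N, ‖Phi fg x v i - h v‖
          ≤ ∑ i ∈ Finset.range N, cΦ * ‖x - h v‖ * lam ^ i :=
            Finset.sum_le_sum (fun i _ => hstab x hx v hv i)
        _ = cΦ * ‖x - h v‖ * ∑ i ∈ Finset.range N, lam ^ i := by
            rw [Finset.mul_sum]
        _ ≤ cΦ * ‖x - h v‖ * (1 / (1 - lam)) := by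
            apply mul_le_mul_of_nonneg_left _ (by positivity)
            have h1 : (0:ℝ) < 1 - lam := by linarith
            rw [geom_sum_eq hlam1.ne]
            have h2 : (lam ^ N - 1) / (lam - 1) = (1 - lam ^ N) / (1 - lam) := by
              rw [div_eq_div_iff (by linarith) (by linarith)]; ring
            rw [h2]
            have h3 : (0:ℝ) ≤ lam ^ N := pow_nonneg hlam0 N
            gcongr
            linarith
        _ = cΦ / (1 - lam) * ‖x - h v‖ := by ring
  · have hshift : ∑ i ∈ Finset.range N, ‖Phi fg (fg x v) v i - h v‖
        = ∑ i ∈ Finset.range N, ‖Phi fg x v (i + 1) - h v‖ := by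
      apply Finset.sum_congr rfl
      intro i _
      rw [Phi_shift]
    rw [hshift]
    have hsum : ∑ i ∈ Finset.range N, ‖Phi fg x v (i + 1) - h v‖
        = (∑ i ∈ Finset.range N, ‖Phi fg x v i - h v‖) + ‖Phi fg x v N - h v‖
          - ‖Phi fg x v 0 - h v‖ := by
      have h1 := Finset.sum_range_succ' (fun i => ‖Phi fg x v i - h v‖) N
      have h2 := Finset.sum_range_succ (fun i => ‖Phi fg x v i - h v‖) N
      linarith
    have hPhiN := hstab x hx v hv N
    have h0 : ‖Phi fg x v 0 - h v‖ = ‖x - h v‖ := rfl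
    rw [hsum, h0]
    nlinarith [hPhiN]
end

section
/- Let X ⊆ ℝⁿ, S_v ⊆ ℝ^o, let f_g : ℝⁿ × ℝ^o → ℝⁿ satisfy ‖f_g(x,v) − f_g(x̃,ṽ)‖ ≤ l_f·‖(x,v) − (x̃,ṽ)‖ for all x, x̃ ∈ X and v, ṽ ∈ S_v, and let h : ℝ^o → ℝⁿ be l_h-Lipschitz on S_v. Fix N ∈ ℕ with N ≥ 1 and define V(x,v) := Σ_{i=0}^{N−1} ‖Φ(x,v,i) − h(v)‖. Then for all x ∈ X and all v, ṽ ∈ S_v such that Φ(x,v,t) ∈ X and Φ(x,ṽ,t) ∈ X for all t ∈ ℕ, one has |V(x,v) − V(x,ṽ)| ≤ l_V·‖v − ṽ‖ with l_V := N·l_h + (N−1)·Σ_{k=1}^{N−1} l_f^k. -/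
open Finset

/-- Euclidean norm of a concatenated pair of vectors. -/
noncomputable def pairNorm {n o : ℕ} (x : EuclideanSpace ℝ (Fin n))
    (v : EuclideanSpace ℝ (Fin o)) : ℝ :=
  Real.sqrt (‖x‖ ^ 2 + ‖v‖ ^ 2)

/-!
Along the two trajectories started at `x` with references `v` and `v'`, the Lipschitz bound on
`f_g` (with `‖(a, c)‖ ≤ ‖a‖ + ‖c‖`) gives the recursion `d_{i+1} ≤ l_f (d_i + ‖v - v'‖)` for
`d_i = ‖Φ(x,v,i) - Φ(x,v',i)‖`, so `d_i ≤ (l_f + ⋯ + l_f^i) ‖v - v'‖`. Each summand of `V` then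
moves by at most `d_i + l_h ‖v - v'‖`, and since `d_0 = 0` and the bounds increase in `i`, the
`N` bounds on the `d_i` add up to at most `(N - 1)(l_f + ⋯ + l_f^{N-1}) ‖v - v'‖`.
-/

theorem pairNorm_le_add {n o : ℕ} (a : EuclideanSpace ℝ (Fin n)) (c : EuclideanSpace ℝ (Fin o)) :
    pairNorm a c ≤ ‖a‖ + ‖c‖ :=
  Real.sqrt_le_iff.2 ⟨by positivity, by nlinarith [norm_nonneg a, norm_nonneg c]⟩

theorem pairNorm_zero_left {n o : ℕ} (c : EuclideanSpace ℝ (Fin o)) :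
    pairNorm (0 : EuclideanSpace ℝ (Fin n)) c = ‖c‖ := by
  simp [pairNorm, Real.sqrt_sq (norm_nonneg c)]

theorem sum_range_pow_succ_succ {R : Type*} [CommSemiring R] (a : R) (i : ℕ) :
    ∑ k ∈ range (i + 1), a ^ (k + 1) = a * (∑ k ∈ range i, a ^ (k + 1) + 1) := by
  simp only [sum_range_succ', mul_add, mul_sum, mul_one, zero_add, pow_one, ← pow_succ']

theorem sum_Icc_one_pow {R : Type*} [CommSemiring R] (a : R) (m : ℕ) :
    ∑ k ∈ Icc 1 m, a ^ k = ∑ k ∈ range m, a ^ (k + 1) := by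
  rw [← Ico_add_one_right_eq_Icc, sum_Ico_eq_sum_range]
  simp [add_comm]

theorem sum_range_le_pred_mul {S : ℕ → ℝ} (hS : Monotone S) (h0 : S 0 = 0) (N : ℕ) :
    ∑ i ∈ range N, S i ≤ ((N : ℝ) - 1) * S (N - 1) := by
  cases N with
  | zero => simp [h0]
  | succ M =>
    rw [sum_range_succ', h0, add_zero]
    simpa using sum_le_card_nsmul (range M) (fun i => S (i + 1)) (S M)
      fun i hi => hS (mem_range.1 hi)

theorem norm_Phi_sub_Phi_le {n o : ℕ} {X : Set (EuclideanSpace ℝ (Fin n))}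
    {Sv : Set (EuclideanSpace ℝ (Fin o))}
    {fg : EuclideanSpace ℝ (Fin n) → EuclideanSpace ℝ (Fin o) → EuclideanSpace ℝ (Fin n)}
    {lf : ℝ} (hlf : 0 ≤ lf)
    (hfgLip : ∀ x ∈ X, ∀ x' ∈ X, ∀ v ∈ Sv, ∀ v' ∈ Sv,
      ‖fg x v - fg x' v'‖ ≤ lf * pairNorm (x - x') (v - v'))
    {x : EuclideanSpace ℝ (Fin n)} {v v' : EuclideanSpace ℝ (Fin o)} (hv : v ∈ Sv) (hv' : v' ∈ Sv)
    (hXv : ∀ t, Phi fg x v t ∈ X) (hXv' : ∀ t, Phi fg x v' t ∈ X) (i : ℕ) :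
    ‖Phi fg x v i - Phi fg x v' i‖ ≤ (∑ k ∈ range i, lf ^ (k + 1)) * ‖v - v'‖ := by
  induction i with
  | zero => simp [Phi]
  | succ i ih =>
    calc ‖Phi fg x v (i + 1) - Phi fg x v' (i + 1)‖
        ≤ lf * pairNorm (Phi fg x v i - Phi fg x v' i) (v - v') :=
          hfgLip _ (hXv i) _ (hXv' i) v hv v' hv'
      _ ≤ lf * ((∑ k ∈ range i, lf ^ (k + 1)) * ‖v - v'‖ + ‖v - v'‖) := by
          gcongr
          exact (pairNorm_le_add _ _).trans (by gcongr)
      _ = (∑ k ∈ range (i + 1), lf ^ (k + 1)) * ‖v - v'‖ := by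
          rw [sum_range_pow_succ_succ]; ring

theorem stmt6_general {n o : ℕ} (X : Set (EuclideanSpace ℝ (Fin n)))
    (Sv : Set (EuclideanSpace ℝ (Fin o)))
    (fg : EuclideanSpace ℝ (Fin n) → EuclideanSpace ℝ (Fin o) → EuclideanSpace ℝ (Fin n))
    (lf : ℝ)
    (hfgLip : ∀ x ∈ X, ∀ x' ∈ X, ∀ v ∈ Sv, ∀ v' ∈ Sv,
      ‖fg x v - fg x' v'‖ ≤ lf * pairNorm (x - x') (v - v'))
    (h : EuclideanSpace ℝ (Fin o) → EuclideanSpace ℝ (Fin n)) (lh : ℝ)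
    (hhLip : ∀ v ∈ Sv, ∀ v' ∈ Sv, ‖h v - h v'‖ ≤ lh * ‖v - v'‖)
    (N : ℕ) :
    ∀ x ∈ X, ∀ v ∈ Sv, ∀ v' ∈ Sv, (∀ t : ℕ, Phi fg x v t ∈ X) →
      (∀ t : ℕ, Phi fg x v' t ∈ X) →
      |(∑ i ∈ Finset.range N, ‖Phi fg x v i - h v‖) -
          ∑ i ∈ Finset.range N, ‖Phi fg x v' i - h v'‖| ≤
        ((N : ℝ) * lh + ((N : ℝ) - 1) * ∑ k ∈ Finset.Icc 1 (N - 1), lf ^ k) * ‖v - v'‖ := by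
  intro x hx v hv v' hv' hXv hXv'
  rcases eq_or_ne v v' with rfl | hvv
  · simp
  have hlf : 0 ≤ lf := by
    have hfg := hfgLip x hx x hx v hv v' hv'
    rw [sub_self, pairNorm_zero_left] at hfg
    exact nonneg_of_mul_nonneg_left ((norm_nonneg _).trans hfg) (norm_sub_pos_iff.2 hvv)
  set S : ℕ → ℝ := fun i => ∑ k ∈ range i, lf ^ (k + 1)
  have hS : Monotone S := fun a b hab =>
    sum_le_sum_of_subset_of_nonneg (range_subset_range.2 hab) fun k _ _ => by positivity
  have hterm (i : ℕ) : |‖Phi fg x v i - h v‖ - ‖Phi fg x v' i - h v'‖| ≤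
      S i * ‖v - v'‖ + lh * ‖v - v'‖ := by
    have hdist := dist_dist_dist_le (Phi fg x v i) (h v) (Phi fg x v' i) (h v')
    simp only [dist_eq_norm, Real.norm_eq_abs] at hdist
    linarith [norm_Phi_sub_Phi_le hlf hfgLip hv hv' hXv hXv' i, hhLip v hv v' hv']
  calc _ = |∑ i ∈ range N, (‖Phi fg x v i - h v‖ - ‖Phi fg x v' i - h v'‖)| := by
        rw [sum_sub_distrib]
    _ ≤ ∑ i ∈ range N, (S i * ‖v - v'‖ + lh * ‖v - v'‖) :=
        (abs_sum_le_sum_abs _ _).trans (sum_le_sum fun i _ => hterm i)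
    _ = (∑ i ∈ range N, S i) * ‖v - v'‖ + N * lh * ‖v - v'‖ := by
        rw [sum_add_distrib, ← sum_mul]; simp only [sum_const, card_range, nsmul_eq_mul]; ring
    _ ≤ ((N : ℝ) - 1) * S (N - 1) * ‖v - v'‖ + N * lh * ‖v - v'‖ := by
        gcongr; exact sum_range_le_pred_mul hS (by simp [S]) N
    _ = _ := by rw [sum_Icc_one_pow]; ring

/-- The Lipschitz-in-the-reference property (with explicit constant
`l_V = N·l_h + (N−1)·Σ_{k=1}^{N−1} l_f^k`) of the Lyapunov function
`V(x,v) = Σ_{i=0}^{N-1} ‖Φ(x,v,i) − h(v)‖` constructed in the proof of Lemma 1 of the paper. -/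
theorem stmt6 {n o : ℕ} (X : Set (EuclideanSpace ℝ (Fin n)))
    (Sv : Set (EuclideanSpace ℝ (Fin o)))
    (fg : EuclideanSpace ℝ (Fin n) → EuclideanSpace ℝ (Fin o) → EuclideanSpace ℝ (Fin n))
    (lf : ℝ)
    (hfgLip : ∀ x ∈ X, ∀ x' ∈ X, ∀ v ∈ Sv, ∀ v' ∈ Sv,
      ‖fg x v - fg x' v'‖ ≤ lf * pairNorm (x - x') (v - v'))
    (h : EuclideanSpace ℝ (Fin o) → EuclideanSpace ℝ (Fin n)) (lh : ℝ)
    (hhLip : ∀ v ∈ Sv, ∀ v' ∈ Sv, ‖h v - h v'‖ ≤ lh * ‖v - v'‖)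
    (N : ℕ) (hN : 1 ≤ N) :
    ∀ x ∈ X, ∀ v ∈ Sv, ∀ v' ∈ Sv, (∀ t : ℕ, Phi fg x v t ∈ X) →
      (∀ t : ℕ, Phi fg x v' t ∈ X) →
      |(∑ i ∈ Finset.range N, ‖Phi fg x v i - h v‖) -
          ∑ i ∈ Finset.range N, ‖Phi fg x v' i - h v'‖| ≤
        ((N : ℝ) * lh + ((N : ℝ) - 1) * ∑ k ∈ Finset.Icc 1 (N - 1), lf ^ k) * ‖v - v'‖ :=
  stmt6_general X Sv fg lf hfgLip h lh hhLip N
end
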